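/- arXiv:2206.00908 — 2 statements merged into one kernel-verified Lean document; each statement's English description precedes it below -/
import Mathlib

section
/- Let A be a nonzero d×d real matrix partitioned into blocks with A₁₁ k×k, and let Y₀ be a (d−k)×k real matrix. Define Δ₀ = W( ‖A‖ / ( ‖[I_k 0]A‖ · ‖[I_k; Y₀]‖ ) ) / ‖A‖, where W is the principal Lambert W function on [0,∞). Then for every s with 0 < s ≤ Δ₀, the k×k matrix U(s) = [I_k 0] e^{As} [I_k; Y₀] is invertible. -/
/-! Write `exp M = 1 + M φ₁(M)`. Since `[I 0] [I; Y₀] = I`, this gives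
`U(s) = I + s [I 0] A φ₁(sA) [I; Y₀]`, and `‖φ₁(sA)‖ ≤ φ₁(s‖A‖) < e^{s‖A‖}` bounds the perturbation
strictly by `s ‖[I 0] A‖ ‖[I; Y₀]‖ e^{s‖A‖}`. The Lambert-`W` choice of `Δ₀` is exactly what makes
this bound at most `1` for `s ≤ Δ₀`, and a perturbation of the identity of norm `< 1` is invertible. -/

open Matrix NormedSpace
open scoped Matrix.Norms.L2Operator
open scoped Nat

section Phi

variable {𝔸 : Type*} [NormedRing 𝔸] [NormedAlgebra ℝ 𝔸]

/-- The first exponential-integrator function `φ₁(a) = (exp a - 1) / a`. -/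
noncomputable def phi₁ (a : 𝔸) : 𝔸 := ∑' n : ℕ, ((n + 1)! : ℝ)⁻¹ • a ^ n

lemma summable_pow_div_succ_factorial {x : ℝ} (hx : 0 ≤ x) :
    Summable fun n : ℕ => x ^ n / (n + 1)! :=
  (Real.summable_pow_div_factorial x).of_nonneg_of_le (fun n => by positivity)
    fun n => by gcongr; exact n.le_succ

lemma norm_phi₁Series_le [NormOneClass 𝔸] (a : 𝔸) (n : ℕ) :
    ‖((n + 1)! : ℝ)⁻¹ • a ^ n‖ ≤ ‖a‖ ^ n / (n + 1)! := by
  rw [norm_smul, norm_inv, Real.norm_natCast, inv_mul_eq_div]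
  gcongr
  exact norm_pow_le a n

lemma summable_norm_phi₁Series [NormOneClass 𝔸] (a : 𝔸) :
    Summable fun n : ℕ => ‖((n + 1)! : ℝ)⁻¹ • a ^ n‖ :=
  (summable_pow_div_succ_factorial (norm_nonneg a)).of_nonneg_of_le (fun _ => norm_nonneg _)
    (norm_phi₁Series_le a)

lemma exp_eq_one_add_mul_phi₁ [NormOneClass 𝔸] [CompleteSpace 𝔸] (a : 𝔸) :
    exp a = 1 + a * phi₁ a := by
  have hshift : HasSum (fun n : ℕ => ((n + 1)! : ℝ)⁻¹ • a ^ (n + 1)) (exp a - 1) := by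
    simpa using (hasSum_nat_add_iff' 1).2 (exp_series_hasSum_exp' (𝕂 := ℝ) a)
  have hmul : HasSum (fun n : ℕ => ((n + 1)! : ℝ)⁻¹ • a ^ (n + 1)) (a * phi₁ a) := by
    simp_rw [pow_succ', ← mul_smul_comm]
    exact ((summable_norm_phi₁Series a).of_norm.hasSum).mul_left a
  rw [hmul.unique hshift, add_sub_cancel]

lemma norm_phi₁_le [NormOneClass 𝔸] (a : 𝔸) : ‖phi₁ a‖ ≤ phi₁ ‖a‖ := by
  simp only [phi₁, smul_eq_mul, inv_mul_eq_div]
  exact (norm_tsum_le_tsum_norm (summable_norm_phi₁Series a)).trans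
    ((summable_norm_phi₁Series a).tsum_le_tsum (norm_phi₁Series_le a)
      (summable_pow_div_succ_factorial (norm_nonneg a)))

lemma Real.phi₁_lt_exp {x : ℝ} (hx : 0 < x) : phi₁ x < Real.exp x := by
  have hphi := exp_eq_one_add_mul_phi₁ x
  rw [← Real.exp_eq_exp_ℝ] at hphi
  -- `1 - x < exp (-x)`, multiplied by `exp x`, is `exp x - 1 < x exp x`
  have h := mul_lt_mul_of_pos_right (Real.add_one_lt_exp (neg_ne_zero.2 hx.ne')) (Real.exp_pos x)
  rw [← Real.exp_add, neg_add_cancel, Real.exp_zero] at h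
  exact lt_of_mul_lt_mul_left (by linarith) hx.le

end Phi

lemma mul_mul_exp_le_one_of_le_lambertW {W : ℝ → ℝ}
    (hW : ∀ y ∈ Set.Ici (0 : ℝ), 0 ≤ W y ∧ W y * Real.exp (W y) = y) {a b s : ℝ} (ha : 0 < a)
    (hb : 0 ≤ b) (hsle : s ≤ W (a / b) / a) : s * b * Real.exp (s * a) ≤ 1 := by
  rcases hb.eq_or_lt with rfl | hb
  · simp
  obtain ⟨hW_nonneg, hW_eq⟩ := hW (a / b) (Set.mem_Ici.2 (by positivity))
  have hx : s * a ≤ W (a / b) := (le_div_iff₀ ha).1 hsle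
  have hmono : s * a * Real.exp (s * a) ≤ a / b :=
    hW_eq ▸ mul_le_mul hx (Real.exp_le_exp.2 hx) (Real.exp_pos _).le hW_nonneg
  calc s * b * Real.exp (s * a) = b / a * (s * a * Real.exp (s * a)) := by field_simp
    _ ≤ b / a * (a / b) := by gcongr
    _ = 1 := by field_simp

theorem Matrix.isUnit_mul_exp_smul_mul {l n : Type*} [Fintype l] [DecidableEq l] [Fintype n]
    [DecidableEq n] {P : Matrix l n ℝ} {Q : Matrix n l ℝ} (hPQ : P * Q = 1) (A : Matrix n n ℝ)
    {s : ℝ} (hs : 0 ≤ s) (h : s * (‖P * A‖ * ‖Q‖) * Real.exp (s * ‖A‖) ≤ 1) :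
    IsUnit (P * exp (s • A) * Q) := by
  by_cases hsA : s • A = 0
  · rw [hsA, exp_zero, Matrix.mul_one, hPQ]
    exact isUnit_one
  have : Nontrivial (Matrix n n ℝ) := nontrivial_of_ne _ _ hsA
  have hU : P * exp (s • A) * Q = 1 - (-s) • (P * A * phi₁ (s • A) * Q) := by
    rw [exp_eq_one_add_mul_phi₁, Matrix.mul_add, Matrix.mul_one, Matrix.add_mul, hPQ, neg_smul,
      sub_neg_eq_add]
    simp only [Matrix.smul_mul, Matrix.mul_smul, Matrix.mul_assoc]
  have hnorm_sA : ‖s • A‖ = s * ‖A‖ := by rw [norm_smul, Real.norm_of_nonneg hs]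
  have hphi : ‖phi₁ (s • A)‖ < Real.exp (s * ‖A‖) :=
    hnorm_sA ▸ (norm_phi₁_le _).trans_lt (Real.phi₁_lt_exp (norm_pos_iff.2 hsA))
  rw [hU]
  refine isUnit_one_sub_of_norm_lt_one ?_
  calc ‖(-s) • (P * A * phi₁ (s • A) * Q)‖
      ≤ s * (‖P * A‖ * ‖phi₁ (s • A)‖ * ‖Q‖) := by
        rw [norm_smul, norm_neg, Real.norm_of_nonneg hs]
        gcongr
        exact (l2_opNorm_mul _ _).trans (by gcongr; exact l2_opNorm_mul _ _)
    _ < 1 := by nlinarith [norm_nonneg (P * A), norm_nonneg Q, norm_nonneg (phi₁ (s • A))]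

/-- Let `A ≠ 0` be a `(k+m) × (k+m)` real matrix and `Y₀` an `m × k` real matrix. With
`Δ₀ = W(‖A‖ / (‖[I 0] A‖ ‖[I; Y₀]‖)) / ‖A‖` (principal Lambert `W`), the matrix
`U(s) = [I 0] e^{As} [I; Y₀]` is invertible for every `0 < s ≤ Δ₀`. -/
theorem stmt_10 (k m : ℕ) (A : Matrix (Fin k ⊕ Fin m) (Fin k ⊕ Fin m) ℝ) (hA : A ≠ 0)
    (Y₀ : Matrix (Fin m) (Fin k) ℝ)
    (W : ℝ → ℝ) (hW : ∀ y ∈ Set.Ici (0 : ℝ), 0 ≤ W y ∧ W y * Real.exp (W y) = y) :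
    ∀ s : ℝ, 0 < s →
      s ≤ W (‖A‖ / (‖fromCols (1 : Matrix (Fin k) (Fin k) ℝ)
              (0 : Matrix (Fin k) (Fin m) ℝ) * A‖ *
            ‖fromRows (1 : Matrix (Fin k) (Fin k) ℝ) Y₀‖)) / ‖A‖ →
      IsUnit (fromCols (1 : Matrix (Fin k) (Fin k) ℝ) (0 : Matrix (Fin k) (Fin m) ℝ) *
        NormedSpace.exp (s • A) * fromRows (1 : Matrix (Fin k) (Fin k) ℝ) Y₀) := by
  intro s hs hsle
  have hPQ : fromCols (1 : Matrix (Fin k) (Fin k) ℝ) (0 : Matrix (Fin k) (Fin m) ℝ) *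
      fromRows (1 : Matrix (Fin k) (Fin k) ℝ) Y₀ = 1 := by
    simp [fromCols_mul_fromRows]
  exact isUnit_mul_exp_smul_mul hPQ A hs.le
    (mul_mul_exp_le_one_of_le_lambertW hW (norm_pos_iff.2 hA) (by positivity) hsle)
end

section
/- Let A be a d×d real matrix defining a Riccati differential equation with escape time function t_A, and suppose the maximal solution Y(·; Y₀) from initial state Y₀ has finite escape time t_A(Y₀) < ∞. Define Δ(t) = W( ‖A‖ / ( ‖[I 0]A‖·‖[I; Y(t;Y₀)]‖ ) )/‖A‖ for t ∈ [0, t_A(Y₀)), and the sequence t₀ = 0, t_{n+1} = t_n + Δ(t_n). Then the sequence {t_n} is strictly increasing, bounded above by t_A(Y₀), and converges to t_A(Y₀). -/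
open Matrix Filter
open scoped Matrix.Norms.L2Operator Topology

/-- `U(t) = [I 0] e^{At} [I; Y₀]`, the upper block of the linearized Riccati flow. -/
noncomputable def stmt11U (k m : ℕ) (A : Matrix (Fin k ⊕ Fin m) (Fin k ⊕ Fin m) ℝ)
    (Y₀ : Matrix (Fin m) (Fin k) ℝ) (t : ℝ) : Matrix (Fin k) (Fin k) ℝ :=
  toRows₁ (NormedSpace.exp (t • A) * fromRows (1 : Matrix (Fin k) (Fin k) ℝ) Y₀)

/-- `Y(t; Y₀) = V(t) U(t)⁻¹`, the solution of the Riccati differential equation. -/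
noncomputable def stmt11Y (k m : ℕ) (A : Matrix (Fin k ⊕ Fin m) (Fin k ⊕ Fin m) ℝ)
    (Y₀ : Matrix (Fin m) (Fin k) ℝ) (t : ℝ) : Matrix (Fin m) (Fin k) ℝ :=
  toRows₂ (NormedSpace.exp (t • A) * fromRows (1 : Matrix (Fin k) (Fin k) ℝ) Y₀) *
    (stmt11U k m A Y₀ t)⁻¹

/-- `Δ(t) = W(‖A‖ / (‖[I 0] A‖ ‖[I; Y(t;Y₀)]‖)) / ‖A‖` (spectral norms). -/
noncomputable def stmt11Delta (k m : ℕ) (A : Matrix (Fin k ⊕ Fin m) (Fin k ⊕ Fin m) ℝ)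
    (Y₀ : Matrix (Fin m) (Fin k) ℝ) (W : ℝ → ℝ) (t : ℝ) : ℝ :=
  W (‖A‖ / (‖fromCols (1 : Matrix (Fin k) (Fin k) ℝ) (0 : Matrix (Fin k) (Fin m) ℝ) * A‖ *
      ‖fromRows (1 : Matrix (Fin k) (Fin k) ℝ) (stmt11Y k m A Y₀ t)‖)) / ‖A‖

/-!
If `U(t)` is invertible, then `U(t + s) = (I + [I 0] (e^{sA} - I) [I; Y(t)]) U(t)`. Comparing
`s ↦ [I 0] (e^{sA} - I)` with its derivative bound gives
`‖[I 0] (e^{sA} - I)‖ ≤ ‖[I 0] A‖ (e^{s‖A‖} - 1) / ‖A‖ < ‖[I 0] A‖ s e^{s‖A‖}`, and `s ≤ Δ(t)` means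
exactly `s‖A‖ e^{s‖A‖} ≤ ‖A‖ / (‖[I 0] A‖ ‖[I; Y(t)]‖)`. So the perturbation of the identity has
norm `< 1`, `U(t + s)` stays invertible, and no step reaches the escape time. The increasing bounded
sequence has a limit `L ≤ t_A(Y₀)`; if `L < t_A(Y₀)`, then `Y` is continuous at `L`, so `Δ` is
bounded below near `L`, which contradicts `t_{n+1} - t_n → 0`.
-/

theorem NormedSpace.norm_exp_le_exp_norm {𝔸 : Type*} [NormedRing 𝔸] [NormedAlgebra ℝ 𝔸]
    [NormOneClass 𝔸] [CompleteSpace 𝔸] (x : 𝔸) : ‖NormedSpace.exp x‖ ≤ Real.exp ‖x‖ := by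
  rw [NormedSpace.exp_eq_tsum ℝ, Real.exp_eq_exp_ℝ, NormedSpace.exp_eq_tsum_div]
  refine (norm_tsum_le_tsum_norm (NormedSpace.norm_expSeries_summable' x)).trans ?_
  refine Summable.tsum_le_tsum (fun n => ?_) (NormedSpace.norm_expSeries_summable' x)
    (Real.summable_pow_div_factorial ‖x‖)
  rw [norm_smul, norm_inv, RCLike.norm_natCast, inv_mul_eq_div]
  gcongr
  exact norm_pow_le x n

theorem Matrix.norm_mul_exp_smul_sub_one_le {l n : Type*} [Fintype l] [Fintype n]
    [DecidableEq n] (C : Matrix l n ℝ) {A : Matrix n n ℝ} (hA : A ≠ 0) {s : ℝ} (hs : 0 ≤ s) :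
    ‖C * (NormedSpace.exp (s • A) - 1)‖ ≤ ‖C * A‖ * (Real.exp (s * ‖A‖) - 1) / ‖A‖ := by
  -- `‖1‖ = 1` for the operator norm needs a nonempty index type
  have : Nonempty n := by
    by_contra h
    exact hA (Matrix.ext fun i => (not_nonempty_iff.mp h).elim i)
  have hApos : 0 < ‖A‖ := norm_pos_iff.mpr hA
  have hderiv (u : ℝ) : HasDerivAt (fun u : ℝ => C * (NormedSpace.exp (u • A) - 1))
      (C * A * NormedSpace.exp (u • A)) u := by
    have hexp := (hasDerivAt_exp_smul_const' (𝕂 := ℝ) A u).sub_const 1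
    rw [Matrix.mul_assoc]
    exact (LinearMap.toContinuousLinearMap (mulLeftLinearMap n ℝ C)).hasFDerivAt.comp_hasDerivAt
      u hexp
  have hB (u : ℝ) : HasDerivAt (fun u => ‖C * A‖ * (Real.exp (u * ‖A‖) - 1) / ‖A‖)
      (‖C * A‖ * Real.exp (u * ‖A‖)) u :=
    ((((hasDerivAt_mul_const ‖A‖).exp.sub_const 1).const_mul ‖C * A‖).div_const ‖A‖).congr_deriv
      (by field_simp)
  refine image_norm_le_of_norm_deriv_right_le_deriv_boundary
    (fun u _ => (hderiv u).continuousAt.continuousWithinAt)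
    (fun u _ => (hderiv u).hasDerivWithinAt) (by simp [NormedSpace.exp_zero]) hB
    (fun u hu => ?_) ⟨hs, le_rfl⟩
  calc ‖C * A * NormedSpace.exp (u • A)‖
      ≤ ‖C * A‖ * ‖NormedSpace.exp (u • A)‖ := l2_opNorm_mul _ _
    _ ≤ ‖C * A‖ * Real.exp (u * ‖A‖) := by
      gcongr
      refine (NormedSpace.norm_exp_le_exp_norm _).trans_eq ?_
      rw [norm_smul, Real.norm_of_nonneg hu.1]

theorem Matrix.fromCols_one_zero_mul {l m n R : Type*} [Fintype l] [Fintype m] [DecidableEq l]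
    [Semiring R] (X : Matrix (l ⊕ m) n R) :
    fromCols (1 : Matrix l l R) (0 : Matrix l m R) * X = toRows₁ X := by
  conv_lhs => rw [← fromRows_toRows X]
  rw [fromCols_mul_fromRows, Matrix.one_mul, Matrix.zero_mul, add_zero]

theorem Matrix.fromRows_one_ne_zero {l m R : Type*} [DecidableEq l] [Nonempty l]
    [MulZeroOneClass R] [Nontrivial R] (Y : Matrix m l R) : fromRows (1 : Matrix l l R) Y ≠ 0 := by
  intro h
  obtain ⟨i⟩ := ‹Nonempty l›
  simpa using congr_fun (congr_fun h (Sum.inl i)) i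

theorem ContinuousAt.matrix_fromRows {X l m n R : Type*} [TopologicalSpace X] [TopologicalSpace R]
    {f : X → Matrix l n R} {g : X → Matrix m n R} {x : X} (hf : ContinuousAt f x)
    (hg : ContinuousAt g x) : ContinuousAt (fun y => fromRows (f y) (g y)) x := by
  refine continuousAt_pi.2 fun i => continuousAt_pi.2 fun j => ?_
  rcases i with i | i
  · exact continuousAt_pi.1 (continuousAt_pi.1 hf i) j
  · exact continuousAt_pi.1 (continuousAt_pi.1 hg i) j

noncomputable def escapeTime {R : Type*} [Monoid R] (f : ℝ → R) : ℝ :=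
  sInf {t | 0 < t ∧ ¬IsUnit (f t)}

theorem isUnit_of_lt_escapeTime {R : Type*} [Monoid R] {f : ℝ → R} (h0 : IsUnit (f 0)) {u : ℝ}
    (hu0 : 0 ≤ u) (hu : u < escapeTime f) : IsUnit (f u) := by
  rcases hu0.eq_or_lt with rfl | hu0
  · exact h0
  · by_contra hfu
    exact (csInf_le (s := {t | 0 < t ∧ ¬IsUnit (f t)}) ⟨0, fun t ht => ht.1.le⟩
      ⟨hu0, hfu⟩).not_gt hu

theorem escapeTime_mem {R : Type*} [NormedRing R] [HasSummableGeomSeries R] {f : ℝ → R}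
    (hf : Continuous f) (h0 : IsUnit (f 0)) (hne : {t | 0 < t ∧ ¬IsUnit (f t)}.Nonempty) :
    0 < escapeTime f ∧ ¬IsUnit (f (escapeTime f)) := by
  have hclosed : IsClosed {t | 0 ≤ t ∧ ¬IsUnit (f t)} :=
    isClosed_Ici.inter (Units.isOpen.isClosed_compl.preimage hf)
  have heq : {t | 0 < t ∧ ¬IsUnit (f t)} = {t | 0 ≤ t ∧ ¬IsUnit (f t)} := by
    ext t
    refine ⟨fun ht => ⟨ht.1.le, ht.2⟩, fun ht => ⟨ht.1.lt_of_ne ?_, ht.2⟩⟩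
    rintro rfl
    exact ht.2 h0
  unfold escapeTime
  rw [heq] at hne ⊢
  obtain ⟨hpos, hT⟩ := hclosed.csInf_mem hne ⟨0, fun t ht => ht.1⟩
  exact ⟨hpos.lt_of_ne fun h => hT (h ▸ h0), hT⟩

theorem Real.exp_sub_one_lt_mul_exp {y : ℝ} (hy : y ≠ 0) : Real.exp y - 1 < y * Real.exp y := by
  have h := Real.add_one_lt_exp (neg_ne_zero.2 hy)
  have hinv : Real.exp (-y) * Real.exp y = 1 := by
    rw [← Real.exp_add, neg_add_cancel, Real.exp_zero]
  nlinarith [Real.exp_pos y]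

def IsLambertW (W : ℝ → ℝ) : Prop := ∀ y ∈ Set.Ici (0 : ℝ), 0 ≤ W y ∧ W y * Real.exp (W y) = y

namespace IsLambertW

variable {W : ℝ → ℝ}

theorem mul_exp_le (hW : IsLambertW W) {y w : ℝ} (hy : 0 ≤ y) (h : w ≤ W y) :
    w * Real.exp w ≤ y :=
  (hW y hy).2 ▸ mul_le_mul h (Real.exp_le_exp.2 h) (Real.exp_pos w).le (hW y hy).1

theorem pos (hW : IsLambertW W) {y : ℝ} (hy : 0 < y) : 0 < W y := by
  refine (hW y hy.le).1.lt_of_ne fun h => hy.ne ?_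
  rw [← (hW y hy.le).2, ← h, zero_mul]

theorem le_of_le (hW : IsLambertW W) {y y' : ℝ} (hy : 0 ≤ y) (h : y ≤ y') : W y ≤ W y' := by
  by_contra! hlt
  have := mul_lt_mul'' hlt (Real.exp_lt_exp.2 hlt) (hW y' (hy.trans h)).1 (Real.exp_pos _).le
  rw [(hW y hy).2, (hW y' (hy.trans h)).2] at this
  exact this.not_ge h

theorem mul_exp_sub_one_lt (hW : IsLambertW W) {P y : ℝ} (hP : 0 ≤ P) (hy : 0 ≤ y)
    (h : y ≤ W P⁻¹) : P * (Real.exp y - 1) < 1 := by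
  rcases hP.eq_or_lt with rfl | hP
  · simp
  rcases hy.eq_or_lt with rfl | hy
  · simp
  calc P * (Real.exp y - 1) < P * (y * Real.exp y) := by
        gcongr
        exact Real.exp_sub_one_lt_mul_exp hy.ne'
    _ ≤ P * P⁻¹ := by gcongr; exact hW.mul_exp_le (inv_nonneg.2 hP.le) h
    _ = 1 := mul_inv_cancel₀ hP.ne'

end IsLambertW

section Riccati

variable {k m : ℕ} {A : Matrix (Fin k ⊕ Fin m) (Fin k ⊕ Fin m) ℝ} {Y₀ : Matrix (Fin m) (Fin k) ℝ}

theorem stmt11U_eq_mul (t : ℝ) :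
    stmt11U k m A Y₀ t = fromCols (1 : Matrix (Fin k) (Fin k) ℝ) (0 : Matrix (Fin k) (Fin m) ℝ) *
      NormedSpace.exp (t • A) * fromRows (1 : Matrix (Fin k) (Fin k) ℝ) Y₀ := by
  rw [Matrix.mul_assoc, fromCols_one_zero_mul, stmt11U]

theorem stmt11U_zero : stmt11U k m A Y₀ 0 = 1 := by
  rw [stmt11U, zero_smul, NormedSpace.exp_zero, Matrix.one_mul, toRows₁_fromRows]

theorem continuous_stmt11U : Continuous (stmt11U k m A Y₀) := by
  refine Continuous.congr ?_ fun t => (stmt11U_eq_mul t).symm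
  exact (continuous_const.matrix_mul (differentiable_exp_smul_const ℝ A).continuous).matrix_mul
    continuous_const

theorem stmt11U_eq_one_of_mul_eq_zero (hA : A ≠ 0)
    (hCA : fromCols (1 : Matrix (Fin k) (Fin k) ℝ) (0 : Matrix (Fin k) (Fin m) ℝ) * A = 0)
    {t : ℝ} (ht : 0 ≤ t) : stmt11U k m A Y₀ t = 1 := by
  have hbound := norm_mul_exp_smul_sub_one_le
    (fromCols (1 : Matrix (Fin k) (Fin k) ℝ) (0 : Matrix (Fin k) (Fin m) ℝ)) hA ht
  rw [hCA, norm_zero, zero_mul, zero_div, norm_le_zero_iff, Matrix.mul_sub, sub_eq_zero,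
    Matrix.mul_one] at hbound
  rw [stmt11U_eq_mul, hbound, fromCols_one_zero_mul, toRows₁_fromRows]

theorem fromRows_one_stmt11Y_mul_stmt11U {t : ℝ} (hU : IsUnit (stmt11U k m A Y₀ t)) :
    fromRows (1 : Matrix (Fin k) (Fin k) ℝ) (stmt11Y k m A Y₀ t) * stmt11U k m A Y₀ t =
      NormedSpace.exp (t • A) * fromRows (1 : Matrix (Fin k) (Fin k) ℝ) Y₀ := by
  rw [fromRows_mul, Matrix.one_mul, stmt11Y, Matrix.mul_assoc,
    Matrix.nonsing_inv_mul _ ((isUnit_iff_isUnit_det _).mp hU), Matrix.mul_one, stmt11U,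
    fromRows_toRows]

theorem stmt11U_add {t : ℝ} (hU : IsUnit (stmt11U k m A Y₀ t)) (s : ℝ) :
    stmt11U k m A Y₀ (t + s) =
      (1 + fromCols (1 : Matrix (Fin k) (Fin k) ℝ) (0 : Matrix (Fin k) (Fin m) ℝ) *
          (NormedSpace.exp (s • A) - 1) *
          fromRows (1 : Matrix (Fin k) (Fin k) ℝ) (stmt11Y k m A Y₀ t)) *
        stmt11U k m A Y₀ t := by
  set C := fromCols (1 : Matrix (Fin k) (Fin k) ℝ) (0 : Matrix (Fin k) (Fin m) ℝ)
  set R := fromRows (1 : Matrix (Fin k) (Fin k) ℝ) (stmt11Y k m A Y₀ t)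
  have hexp :
      NormedSpace.exp ((t + s) • A) = NormedSpace.exp (s • A) * NormedSpace.exp (t • A) := by
    rw [add_comm, add_smul]
    exact Matrix.exp_add_of_commute _ _ (((Commute.refl A).smul_left s).smul_right t)
  have hCR : C * R = 1 := by rw [fromCols_one_zero_mul, toRows₁_fromRows]
  calc stmt11U k m A Y₀ (t + s)
      = C * (NormedSpace.exp (s • A) *
          (NormedSpace.exp (t • A) * fromRows (1 : Matrix (Fin k) (Fin k) ℝ) Y₀)) := by
        rw [stmt11U_eq_mul, hexp, Matrix.mul_assoc, Matrix.mul_assoc]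
    _ = C * (NormedSpace.exp (s • A) * (R * stmt11U k m A Y₀ t)) := by
        rw [fromRows_one_stmt11Y_mul_stmt11U hU]
    _ = (1 + C * (NormedSpace.exp (s • A) - 1) * R) * stmt11U k m A Y₀ t := by
        rw [Matrix.mul_sub, Matrix.sub_mul, Matrix.mul_one, hCR, add_sub_cancel,
          Matrix.mul_assoc, Matrix.mul_assoc]

theorem isUnit_stmt11U_add {W : ℝ → ℝ} (hW : IsLambertW W) (hA : A ≠ 0) {t s : ℝ}
    (hU : IsUnit (stmt11U k m A Y₀ t)) (hs : 0 ≤ s) (hsΔ : s ≤ stmt11Delta k m A Y₀ W t) :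
    IsUnit (stmt11U k m A Y₀ (t + s)) := by
  rw [stmt11U_add hU]
  refine IsUnit.mul ?_ hU
  set C := fromCols (1 : Matrix (Fin k) (Fin k) ℝ) (0 : Matrix (Fin k) (Fin m) ℝ)
  set R := fromRows (1 : Matrix (Fin k) (Fin k) ℝ) (stmt11Y k m A Y₀ t)
  set P := ‖C * A‖ * ‖R‖ / ‖A‖
  have hApos : 0 < ‖A‖ := norm_pos_iff.2 hA
  have hsW : s * ‖A‖ ≤ W P⁻¹ := by
    rw [inv_div]
    exact (le_div_iff₀ hApos).1 hsΔ
  have hsmall : ‖C * (NormedSpace.exp (s • A) - 1) * R‖ < 1 :=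
    calc ‖C * (NormedSpace.exp (s • A) - 1) * R‖
        ≤ ‖C * (NormedSpace.exp (s • A) - 1)‖ * ‖R‖ := l2_opNorm_mul _ _
      _ ≤ ‖C * A‖ * (Real.exp (s * ‖A‖) - 1) / ‖A‖ * ‖R‖ := by
        gcongr
        exact norm_mul_exp_smul_sub_one_le C hA hs
      _ = P * (Real.exp (s * ‖A‖) - 1) := by ring
      _ < 1 := hW.mul_exp_sub_one_lt (by positivity) (by positivity) hsW
  rw [← sub_neg_eq_add]
  exact isUnit_one_sub_of_norm_lt_one (by rwa [norm_neg])

theorem add_stmt11Delta_lt {W : ℝ → ℝ} (hW : IsLambertW W) (hA : A ≠ 0) {t T : ℝ}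
    (hU : IsUnit (stmt11U k m A Y₀ t)) (hT : ¬IsUnit (stmt11U k m A Y₀ T)) (ht : t < T) :
    t + stmt11Delta k m A Y₀ W t < T := by
  by_contra! hle
  exact hT (by simpa using isUnit_stmt11U_add hW hA hU (sub_nonneg.2 ht.le) (by linarith))

theorem continuousAt_stmt11Y {t : ℝ} (hU : IsUnit (stmt11U k m A Y₀ t)) :
    ContinuousAt (stmt11Y k m A Y₀) t := by
  have hV : Continuous fun t : ℝ =>
      toRows₂ (NormedSpace.exp (t • A) * fromRows (1 : Matrix (Fin k) (Fin k) ℝ) Y₀) :=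
    ((differentiable_exp_smul_const ℝ A).continuous.matrix_mul continuous_const).matrix_submatrix
      Sum.inr id
  have hinv : ContinuousAt (fun t => (stmt11U k m A Y₀ t)⁻¹) t :=
    (continuousAt_matrix_inv _ (NormedRing.inverse_continuousAt
      ((isUnit_iff_isUnit_det _).mp hU).unit)).comp continuous_stmt11U.continuousAt
  exact (continuous_fst.matrix_mul continuous_snd).continuousAt.comp (hV.continuousAt.prodMk hinv)

variable [Nonempty (Fin k)] {W : ℝ → ℝ}

theorem stmt11Delta_pos (hW : IsLambertW W) (hA : A ≠ 0)
    (hCA : fromCols (1 : Matrix (Fin k) (Fin k) ℝ) (0 : Matrix (Fin k) (Fin m) ℝ) * A ≠ 0)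
    (t : ℝ) : 0 < stmt11Delta k m A Y₀ W t :=
  div_pos (hW.pos (div_pos (norm_pos_iff.2 hA) (mul_pos (norm_pos_iff.2 hCA)
    (norm_pos_iff.2 (fromRows_one_ne_zero _))))) (norm_pos_iff.2 hA)

theorem eventually_le_stmt11Delta (hW : IsLambertW W) (hA : A ≠ 0)
    (hCA : fromCols (1 : Matrix (Fin k) (Fin k) ℝ) (0 : Matrix (Fin k) (Fin m) ℝ) * A ≠ 0)
    {L : ℝ} (hU : IsUnit (stmt11U k m A Y₀ L)) :
    ∃ ε > 0, ∀ᶠ t in 𝓝 L, ε ≤ stmt11Delta k m A Y₀ W t := by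
  set r := fun t => ‖fromRows (1 : Matrix (Fin k) (Fin k) ℝ) (stmt11Y k m A Y₀ t)‖
  have hr : ContinuousAt r L :=
    (continuousAt_const.matrix_fromRows (continuousAt_stmt11Y hU)).norm
  have hr_pos (t : ℝ) : 0 < r t := norm_pos_iff.2 (fromRows_one_ne_zero _)
  have ha := norm_pos_iff.2 hA
  have hc := norm_pos_iff.2 hCA
  refine ⟨W (‖A‖ / (‖fromCols (1 : Matrix (Fin k) (Fin k) ℝ) (0 : Matrix (Fin k) (Fin m) ℝ) * A‖ *
    (r L + 1))) / ‖A‖, div_pos (hW.pos (by positivity)) ha, ?_⟩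
  filter_upwards [hr.eventually (Iio_mem_nhds (lt_add_one (r L)))] with t ht
  refine div_le_div_of_nonneg_right (hW.le_of_le (by positivity) ?_) ha.le
  have := hr_pos t
  exact div_le_div_of_nonneg_left ha.le (by positivity) (by gcongr)

end Riccati

theorem tendsto_of_succ_eq_add_of_eventually_le {x : ℕ → ℝ} {D : ℝ → ℝ} {T : ℝ}
    (hx : ∀ n, x (n + 1) = x n + D (x n)) (hmono : Monotone x) (hle : ∀ n, x n ≤ T)
    (hD : ∀ L, x 0 ≤ L → L < T → ∃ ε > 0, ∀ᶠ t in 𝓝 L, ε ≤ D t) :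
    Tendsto x atTop (𝓝 T) := by
  have hL := tendsto_atTop_ciSup hmono ⟨T, by rintro _ ⟨n, rfl⟩; exact hle n⟩
  set L := ⨆ n, x n
  rcases (le_of_tendsto' hL hle).eq_or_lt with hLT | hLT
  · rwa [hLT] at hL
  obtain ⟨ε, hε, hεD⟩ := hD L (hmono.ge_of_tendsto hL 0) hLT
  have hstep : Tendsto (fun n => D (x n)) atTop (𝓝 0) := by
    simpa [hx] using ((tendsto_add_atTop_iff_nat 1).2 hL).sub hL
  exact absurd (ge_of_tendsto hstep (hL.eventually hεD)) (not_le.2 hε)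

/-- Suppose the Riccati differential equation defined by `A ≠ 0` has finite escape time
from `Y₀`, i.e. the set `E` of positive times at which `U(t)` is singular is nonempty, so
that the escape time is `t_A(Y₀) = sInf E`.  Then the sequence `t₀ = 0`,
`t_{n+1} = t_n + Δ(t_n)` is strictly increasing, bounded above by `t_A(Y₀)`, and converges
to `t_A(Y₀)`. -/
theorem stmt_11 (k m : ℕ) (A : Matrix (Fin k ⊕ Fin m) (Fin k ⊕ Fin m) ℝ) (hA : A ≠ 0)
    (Y₀ : Matrix (Fin m) (Fin k) ℝ)
    (W : ℝ → ℝ) (hW : ∀ y ∈ Set.Ici (0 : ℝ), 0 ≤ W y ∧ W y * Real.exp (W y) = y)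
    (hfin : {t : ℝ | 0 < t ∧ ¬ IsUnit (stmt11U k m A Y₀ t)}.Nonempty)
    (seq : ℕ → ℝ) (hseq0 : seq 0 = 0)
    (hseq : ∀ n : ℕ, seq (n + 1) = seq n + stmt11Delta k m A Y₀ W (seq n)) :
    StrictMono seq ∧
    (∀ n : ℕ, seq n ≤ sInf {t : ℝ | 0 < t ∧ ¬ IsUnit (stmt11U k m A Y₀ t)}) ∧
    Tendsto seq atTop (𝓝 (sInf {t : ℝ | 0 < t ∧ ¬ IsUnit (stmt11U k m A Y₀ t)})) := by
  change StrictMono seq ∧ (∀ n, seq n ≤ escapeTime (stmt11U k m A Y₀)) ∧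
    Tendsto seq atTop (𝓝 (escapeTime (stmt11U k m A Y₀)))
  have h0 : IsUnit (stmt11U k m A Y₀ 0) := stmt11U_zero (A := A) (Y₀ := Y₀) ▸ isUnit_one
  obtain ⟨hTpos, hT⟩ := escapeTime_mem continuous_stmt11U h0 hfin
  have : Nonempty (Fin k) := by
    by_contra hk
    rw [not_nonempty_iff] at hk
    exact hT (isUnit_of_subsingleton _)
  have hCA : fromCols (1 : Matrix (Fin k) (Fin k) ℝ) (0 : Matrix (Fin k) (Fin m) ℝ) * A ≠ 0 :=
    fun h => hT (stmt11U_eq_one_of_mul_eq_zero hA h hTpos.le ▸ isUnit_one)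
  have hΔ := stmt11Delta_pos (Y₀ := Y₀) hW hA hCA
  have hlt (n : ℕ) : 0 ≤ seq n ∧ seq n < escapeTime (stmt11U k m A Y₀) := by
    induction n with
    | zero => exact ⟨hseq0.ge, hseq0 ▸ hTpos⟩
    | succ n ih =>
      rw [hseq n]
      exact ⟨by linarith [hΔ (seq n)],
        add_stmt11Delta_lt hW hA (isUnit_of_lt_escapeTime h0 ih.1 ih.2) hT ih.2⟩
  have hmono : StrictMono seq :=
    strictMono_nat_of_lt_succ fun n => by linarith [hseq n, hΔ (seq n)]
  refine ⟨hmono, fun n => (hlt n).2.le, tendsto_of_succ_eq_add_of_eventually_le hseq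
    hmono.monotone (fun n => (hlt n).2.le) fun L hL hLT => ?_⟩
  exact eventually_le_stmt11Delta hW hA hCA (isUnit_of_lt_escapeTime h0 (hseq0 ▸ hL) hLT)
end
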